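/- arXiv:1905.01949 — 3 statements merged into one kernel-verified Lean document; each statement's English description precedes it below -/
import Mathlib

section
/- Let G be an l-group, A a Q-algebra, and V an irreducible smooth (A,G)-module that is A-admissible (V^L is a finitely generated A-module for every open compact subgroup L). Then the annihilator Ann_A(V) is a maximal ideal of A. -/
/-- The A-submodule of L-fixed vectors of a module with commuting A-linear G-action. -/
def invariants {G A V : Type*} [Group G] [CommRing A]
    [AddCommGroup V] [Module A V] [DistribMulAction G V] [SMulCommClass G A V]
    (L : Subgroup G) : Submodule A V where
  carrier := {v | ∀ l ∈ L, l • v = v}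
  add_mem' := by
    intro a b ha hb l hl
    rw [smul_add, ha l hl, hb l hl]
  zero_mem' := by
    intro l _
    exact smul_zero l
  smul_mem' := by
    intro a v hv l hl
    rw [smul_comm, hv l hl]

/-! Let `m ⊇ Ann V` be a maximal ideal. The `G`-stable submodule `m V` is `0` or `V`, and
`m V = 0` means `m = Ann V`. If `m V = V`, then averaging over finite quotients of an open
compact subgroup `K` (possible because `A` contains `ℚ`) gives `V^K = (m V)^K = m V^K`, so by
Nakayama some `r ≡ 1 mod m` kills the finitely generated `V^K ≠ 0`. The kernel of `r` is then
a nonzero `G`-stable submodule, hence all of `V`, so `r ∈ Ann V ⊆ m`: a contradiction. -/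

section CosetSum

variable {H A V : Type*} [Group H] [CommRing A] [AddCommGroup V] [Module A V]
  [DistribMulAction H V] [SMulCommClass H A V] (N : Subgroup H) [Fintype (H ⧸ N)]

noncomputable def cosetSum : V →ₗ[A] V where
  toFun v := ∑ c : H ⧸ N, c.out • v
  map_add' v w := by simp only [smul_add, Finset.sum_add_distrib]
  map_smul' a v := by simp only [smul_comm _ a, RingHom.id_apply, Finset.smul_sum]

variable {N}

lemma cosetSum_apply (v : V) : cosetSum (A := A) N v = ∑ c : H ⧸ N, c.out • v := rfl

omit [Fintype (H ⧸ N)] in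
lemma smul_eq_smul_of_mk_eq {v : V} (hv : ∀ n ∈ N, n • v = v) {h h' : H}
    (hh : (h : H ⧸ N) = h') : h • v = h' • v := by
  rw [← mul_inv_cancel_left h h', mul_smul, hv _ (QuotientGroup.eq.mp hh)]

lemma smul_cosetSum {v : V} (hv : ∀ n ∈ N, n • v = v) (h : H) :
    h • cosetSum (A := A) N v = cosetSum (A := A) N v := by
  rw [cosetSum_apply, Finset.smul_sum]
  calc ∑ c : H ⧸ N, h • c.out • v = ∑ c : H ⧸ N, (h • c).out • v := by
        refine Fintype.sum_congr _ _ fun c => ?_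
        rw [← mul_smul]
        refine smul_eq_smul_of_mk_eq hv ?_
        rw [QuotientGroup.out_eq', ← smul_eq_mul, ← MulAction.Quotient.smul_mk,
          QuotientGroup.out_eq']
    _ = ∑ c : H ⧸ N, c.out • v := Fintype.sum_equiv (MulAction.toPerm h) _ _ fun _ => rfl

lemma cosetSum_of_forall_smul_eq {v : V} (hv : ∀ h : H, h • v = v) :
    cosetSum (A := A) N v = Fintype.card (H ⧸ N) • v := by
  simp [cosetSum_apply, hv]

end CosetSum

section Invariants

variable {G A V : Type*} [Group G] [CommRing A] [AddCommGroup V] [Module A V]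
  [DistribMulAction G V] [SMulCommClass G A V]

lemma isOpen_fixingSubgroup [TopologicalSpace G] (hsmooth : ∀ v : V, IsOpen {g : G | g • v = v})
    {s : Set V} (hs : s.Finite) : IsOpen (fixingSubgroup G s : Set G) := by
  have hfix : (fixingSubgroup G s : Set G) = ⋂ v ∈ s, {g : G | g • v = v} := by
    ext g
    simp [mem_fixingSubgroup_iff]
  rw [hfix]
  exact hs.isOpen_biInter fun v _ => hsmooth v

lemma exists_isOpen_isCompact_mem_invariants [TopologicalSpace G]
    (hbasis : ∀ U ∈ nhds (1 : G), ∃ K : Subgroup G,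
      IsOpen (K : Set G) ∧ IsCompact (K : Set G) ∧ (K : Set G) ⊆ U)
    (hsmooth : ∀ v : V, IsOpen {g : G | g • v = v}) (v : V) :
    ∃ K : Subgroup G, IsOpen (K : Set G) ∧ IsCompact (K : Set G) ∧
      v ∈ invariants (A := A) K := by
  obtain ⟨K, hKo, hKc, hK⟩ := hbasis _ ((hsmooth v).mem_nhds (one_smul G v))
  exact ⟨K, hKo, hKc, fun _ hk => hK hk⟩

lemma invariants_inf_ideal_smul_top_le [TopologicalSpace G] [IsTopologicalGroup G] [Algebra ℚ A]
    (hsmooth : ∀ v : V, IsOpen {g : G | g • v = v}) {K : Subgroup G}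
    (hK : IsCompact (K : Set G)) (I : Ideal A) :
    invariants K ⊓ I • ⊤ ≤ I • invariants (A := A) (V := V) K := by
  intro w hw
  obtain ⟨hwK, hwI⟩ := Submodule.mem_inf.mp hw
  rw [← Submodule.span_univ, ← Set.range_id,
    Submodule.mem_ideal_smul_span_iff_exists_sum] at hwI
  obtain ⟨a, haI, rfl⟩ := hwI
  simp only [id_eq] at hwK ⊢
  let N := fixingSubgroup K (a.support : Set V)
  have : CompactSpace K := isCompact_iff_compactSpace.mp hK
  have : Finite (K ⧸ N) := Subgroup.quotient_finite_of_isOpen N <|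
    isOpen_fixingSubgroup (fun v => by exact (hsmooth v).preimage continuous_subtype_val)
      a.support.finite_toSet
  have := Fintype.ofFinite (K ⧸ N)
  have hsum : cosetSum (A := A) N (a.sum fun v c => c • v) ∈ I • invariants (A := A) K := by
    rw [Finsupp.sum, map_sum]
    refine Submodule.sum_mem _ fun v hv => ?_
    rw [map_smul]
    refine Submodule.smul_mem_smul (haI v) fun k hk => ?_
    exact smul_cosetSum (fun n hn => (mem_fixingSubgroup_iff K).mp hn v hv) ⟨k, hk⟩
  have hcard : IsUnit (Fintype.card (K ⧸ N) : A) := by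
    simpa using (IsUnit.mk0 (Fintype.card (K ⧸ N) : ℚ) (by simp)).map (algebraMap ℚ A)
  rwa [cosetSum_of_forall_smul_eq (N := N) fun k => hwK k k.2, ← Nat.cast_smul_eq_nsmul A,
    Submodule.smul_mem_iff_of_isUnit _ hcard] at hsum

lemma ideal_smul_top_smul_mem (I : Ideal A) :
    ∀ g : G, ∀ v ∈ I • (⊤ : Submodule A V), g • v ∈ I • (⊤ : Submodule A V) := by
  intro g v hv
  refine Submodule.smul_induction_on hv (fun a ha w _ => ?_) fun x y hx hy => ?_
  · rw [smul_comm]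
    exact Submodule.smul_mem_smul ha Submodule.mem_top
  · rw [smul_add]
    exact add_mem hx hy

lemma mem_annihilator_of_smul_eq_zero
    (hirr : ∀ W : Submodule A V, (∀ g : G, ∀ v ∈ W, g • v ∈ W) → W = ⊥ ∨ W = ⊤)
    {r : A} {v : V} (hv : v ≠ 0) (hrv : r • v = 0) : r ∈ Module.annihilator A V := by
  have hstable : ∀ g : G, ∀ w ∈ LinearMap.ker (LinearMap.lsmul A V r),
      g • w ∈ LinearMap.ker (LinearMap.lsmul A V r) := by
    intro g w hw
    simp only [LinearMap.mem_ker, LinearMap.lsmul_apply] at hw ⊢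
    rw [← smul_comm g r w, hw, smul_zero]
  obtain hbot | htop := hirr _ hstable
  · have hvker : v ∈ LinearMap.ker (LinearMap.lsmul A V r) := hrv
    exact absurd ((Submodule.mem_bot A).mp (hbot ▸ hvker)) hv
  · exact Module.mem_annihilator.mpr fun w => LinearMap.mem_ker.mp (htop ▸ Submodule.mem_top)

end Invariants

/-- Let G be an l-group, A a ℚ-algebra, and V a nonzero irreducible smooth (A,G)-module which
is A-admissible (V^L is finitely generated over A for every open compact subgroup L).
Then Ann_A(V) is a maximal ideal of A. -/
theorem stmt_5 {G A V : Type*} [Group G] [TopologicalSpace G] [IsTopologicalGroup G]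
    [CommRing A] [Algebra ℚ A]
    [AddCommGroup V] [Module A V] [DistribMulAction G V] [SMulCommClass G A V]
    [Nontrivial V]
    (hbasis : ∀ U ∈ nhds (1 : G), ∃ K : Subgroup G,
      IsOpen (K : Set G) ∧ IsCompact (K : Set G) ∧ (K : Set G) ⊆ U)
    (hsmooth : ∀ v : V, IsOpen {g : G | g • v = v})
    (hirr : ∀ W : Submodule A V, (∀ g : G, ∀ v ∈ W, g • v ∈ W) → W = ⊥ ∨ W = ⊤)
    (hadm : ∀ L : Subgroup G, IsOpen (L : Set G) → IsCompact (L : Set G) →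
      (invariants (G := G) (A := A) (V := V) L).FG) :
    (Module.annihilator A V).IsMaximal := by
  obtain ⟨m, hm, hannm⟩ := Ideal.exists_le_maximal _
    ((Module.annihilator_eq_top_iff (R := A)).not.mpr (not_subsingleton V))
  suffices hmann : m ≤ Module.annihilator A V from le_antisymm hannm hmann ▸ hm
  rw [← Submodule.annihilator_top, Submodule.le_annihilator_iff]
  refine (hirr _ (ideal_smul_top_smul_mem m)).resolve_right fun htop => ?_
  obtain ⟨v, hv⟩ := exists_ne (0 : V)
  obtain ⟨K, hKo, hKc, hvK⟩ := exists_isOpen_isCompact_mem_invariants (A := A) hbasis hsmooth v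
  have hle : invariants K ≤ m • invariants (A := A) (V := V) K := by
    simpa [htop] using invariants_inf_ideal_smul_top_le hsmooth hKc m
  obtain ⟨r, hr1, hrK⟩ :=
    Submodule.exists_sub_one_mem_and_smul_eq_zero_of_fg_of_le_smul m _ (hadm K hKo hKc) hle
  have hrm : r ∈ m := hannm (mem_annihilator_of_smul_eq_zero hirr hv (hrK v hvK))
  exact hm.ne_top ((Ideal.eq_top_iff_one m).mpr (by simpa using m.sub_mem hrm hr1))
end

section
/- Let H = H(G,A) be the Hecke algebra and let e = ε_L be its idempotent with eHe = H(G,L,A). For a maximal proper left ideal I of eHe, the sum J_I of all proper left ideals of He contained in He and containing I is itself a proper left ideal, is the unique maximal proper left ideal of He containing I, and satisfies e·J_I = I. -/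
/-- Abstract Hecke-algebra setting: H a (possibly non-unital) ring, e an idempotent, so that
eHe is a unital ring with identity e.  Let I be a maximal proper left ideal of eHe.  Then:
every left ideal J of H contained in He with eJ = I is proper; there is a largest proper
left ideal J_I of H contained in He and containing I (the sum of all of them), and it
satisfies e·J_I = I. -/
theorem stmt_10 {H : Type*} [NonUnitalRing H] (e : H) (he : e * e = e)
    (I : AddSubgroup H)
    -- I is contained in eHe
    (hIe : ∀ x ∈ I, e * x * e = x)
    -- I is a left ideal of the unital ring eHe
    (hImul : ∀ a x : H, e * a * e = a → x ∈ I → a * x ∈ I)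
    -- I is proper in eHe
    (hIproper : ∃ a : H, e * a * e = a ∧ a ∉ I)
    -- I is maximal among proper left ideals of eHe
    (hImax : ∀ J : AddSubgroup H, (∀ x ∈ J, e * x * e = x) →
      (∀ a x : H, e * a * e = a → x ∈ J → a * x ∈ J) → I ≤ J →
      J = I ∨ (∀ a : H, e * a * e = a → a ∈ J)) :
    -- (1) any left ideal of H inside He with e·J = I is proper (≠ He)
    (∀ J : AddSubgroup H, (∀ x ∈ J, x * e = x) → (∀ h : H, ∀ x ∈ J, h * x ∈ J) →
      (∀ x ∈ J, e * x ∈ I) → (∀ x ∈ I, x ∈ J) → ∃ h : H, h * e ∉ J) ∧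
    -- (2) there is a unique maximal proper left ideal J_I of H inside He containing I,
    --     namely the sum of all proper left ideals of He containing I, and e·J_I = I
    (∃ JI : AddSubgroup H,
      (∀ x ∈ JI, x * e = x) ∧
      (∀ h : H, ∀ x ∈ JI, h * x ∈ JI) ∧
      (∀ x ∈ I, x ∈ JI) ∧
      (∃ h : H, h * e ∉ JI) ∧
      -- J_I dominates every proper left ideal of He containing I
      (∀ J : AddSubgroup H, (∀ x ∈ J, x * e = x) → (∀ h : H, ∀ x ∈ J, h * x ∈ J) →
        (∀ x ∈ I, x ∈ J) → (∃ h : H, h * e ∉ J) → J ≤ JI) ∧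
      -- e · J_I = I
      (∀ x ∈ JI, e * x ∈ I)) := by
  -- basic consequences of x = e*x*e
  have hleft : ∀ x : H, e * x * e = x → e * x = x := by
    intro x hx
    conv_lhs => rw [← hx]
    rw [← mul_assoc, ← mul_assoc, he, hx]
  have hright : ∀ x : H, e * x * e = x → x * e = x := by
    intro x hx
    conv_lhs => rw [← hx]
    rw [mul_assoc, he, hx]
  -- if e ∈ I then I = eHe, contradicting properness
  have hIfull : e ∈ I → False := by
    intro heIn
    obtain ⟨a, ha, haI⟩ := hIproper
    have h1 : a * e ∈ I := hImul a e ha heIn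
    rw [hright a ha] at h1
    exact haI h1
  constructor
  · -- part (1)
    intro J hJe hJl hJeI hIJ
    refine ⟨e, fun heJ => ?_⟩
    have : e * (e * e) ∈ I := hJeI _ heJ
    rw [he, he] at this
    exact hIfull this
  · -- part (2): construct JI
    refine ⟨{ carrier := {x | x * e = x ∧ ∀ h : H, e * h * x ∈ I}
              add_mem' := ?_
              zero_mem' := ?_
              neg_mem' := ?_ }, ?_, ?_, ?_, ?_, ?_, ?_⟩
    · rintro a b ⟨ha1, ha2⟩ ⟨hb1, hb2⟩
      exact ⟨by rw [add_mul, ha1, hb1], fun h => by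
        rw [mul_add]; exact I.add_mem (ha2 h) (hb2 h)⟩
    · exact ⟨by rw [zero_mul], fun h => by rw [mul_zero]; exact I.zero_mem⟩
    · rintro a ⟨ha1, ha2⟩
      exact ⟨by rw [neg_mul, ha1], fun h => by rw [mul_neg]; exact I.neg_mem (ha2 h)⟩
    · exact fun x hx => hx.1
    · -- left ideal
      rintro h x ⟨hx1, hx2⟩
      refine ⟨by rw [mul_assoc, hx1], fun h' => ?_⟩
      have := hx2 (h' * h)
      simp only [mul_assoc] at this ⊢
      exact this
    · -- contains I
      intro x hx
      refine ⟨hright x (hIe x hx), fun h => ?_⟩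
      have : (e * h * e) * x ∈ I := hImul _ x (by simp only [← mul_assoc, he]; rw [mul_assoc, he]) hx
      rwa [mul_assoc, hleft x (hIe x hx)] at this
    · -- proper: e ∉ JI
      refine ⟨e, fun hmem => ?_⟩
      rw [he] at hmem
      obtain ⟨a, ha, haI⟩ := hIproper
      exact haI (ha ▸ hmem.2 a)
    · -- domination
      intro J hJe hJl hIJ ⟨h0, hh0⟩ x hxJ
      -- consider eJ = image of J under left multiplication by e
      set K : AddSubgroup H := J.map (AddMonoidHom.mulLeft e) with hK
      have hmemK : ∀ y : H, y ∈ K ↔ ∃ z ∈ J, e * z = y := by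
        intro y
        simp [hK, AddSubgroup.mem_map, AddMonoidHom.mulLeft]
      have hK1 : ∀ y ∈ K, e * y * e = y := by
        intro y hy
        obtain ⟨z, hz, rfl⟩ := (hmemK y).mp hy
        simp only [← mul_assoc, he]
        rw [mul_assoc, hJe z hz]
      have hK2 : ∀ a y : H, e * a * e = a → y ∈ K → a * y ∈ K := by
        intro a y ha hy
        obtain ⟨z, hz, rfl⟩ := (hmemK y).mp hy
        refine (hmemK _).mpr ⟨a * z, hJl a z hz, ?_⟩
        rw [← mul_assoc, hleft a ha, ← mul_assoc, hright a ha]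
      have hK3 : I ≤ K := by
        intro y hy
        exact (hmemK y).mpr ⟨y, hIJ y hy, hleft y (hIe y hy)⟩
      rcases hImax K hK1 hK2 hK3 with hKI | hKfull
      · -- eJ = I : then J ≤ JI
        refine ⟨hJe x hxJ, fun h => ?_⟩
        have : e * (h * x) ∈ K := (hmemK _).mpr ⟨h * x, hJl h x hxJ, rfl⟩
        rw [hKI] at this
        rwa [mul_assoc]
      · -- eJ = eHe : contradiction with properness of J
        exfalso
        have heK : e ∈ K := hKfull e (by rw [he, he])
        obtain ⟨z, hz, hez⟩ := (hmemK e).mp heK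
        have h1 : h0 * (e * z) ∈ J := hJl h0 (e * z) (hJl e z hz)
        rw [hez] at h1
        exact hh0 h1
    · -- e · JI = I
      rintro x ⟨hx1, hx2⟩
      have := hx2 e
      rwa [he] at this
end

section
/- Let A be a field of characteristic zero, D a finite-dimensional division A-algebra whose center contains A, and W a finite-dimensional left D-vector space. Then for any field extension B of A, the B-algebra B ⊗_A End_D(W) is semisimple. -/
/-!
Let `T(x, y) = tr_A(z ↦ x y z)` be the trace form of `E = End_D(W)` over `A`. Its kernel is a
two-sided ideal of the simple ring `E` (the trace is cyclic) and does not contain `1`, because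
`T(1, 1) = dim_A E ≠ 0` in characteristic zero; so `T` is nondegenerate. The trace form of
`B ⊗_A E` over `B` is the base change of `T`, whose Gram matrix is that of `T` read in `B`, so it
is nondegenerate too. Finally, an algebra with nondegenerate trace form is semisimple (Dickson):
its Jacobson radical is nilpotent, hence lies in the kernel of the trace form.
-/

open TensorProduct

theorem Module.End.finiteDimensional_of_isScalarTower (A D W : Type*) [Field A] [DivisionRing D]
    [Algebra A D] [FiniteDimensional A D] [AddCommGroup W] [Module D W] [Module.Finite D W]
    [Module A W] [IsScalarTower A D W] : FiniteDimensional A (Module.End D W) :=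
  have : Module.Finite A W := .trans D W
  .of_injective (LinearMap.restrictScalarsₗ A D W W A) (LinearMap.restrictScalars_injective A)

theorem Module.End.isSimpleRing (D W : Type*) [DivisionRing D] [AddCommGroup W] [Module D W]
    [Module.Finite D W] [Nontrivial W] : IsSimpleRing (Module.End D W) := by
  let n := Module.finrank D W
  have : Nonempty (Fin n) := ⟨⟨0, Module.finrank_pos⟩⟩
  let e : Module.End D W ≃+* Matrix (Fin n) (Fin n) Dᵐᵒᵖ :=
    (Module.finBasis D W).equivFun.conjRingEquiv |>.trans
      (endVecRingEquivMatrixEnd (Fin n) D D) |>.trans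
      (AlgEquiv.moduleEndSelf ℤ).symm.toRingEquiv.mapMatrix
  exact .of_ringEquiv e.symm inferInstance

namespace Algebra

variable (K R : Type*) [Field K] [Ring R] [Algebra K R]

noncomputable def lmulTraceForm : LinearMap.BilinForm K R :=
  (LinearMap.mul K R).compr₂ ((LinearMap.trace K R).comp (Algebra.lmul K R).toLinearMap)

variable {K R}

@[simp]
theorem lmulTraceForm_apply (x y : R) :
    lmulTraceForm K R x y = LinearMap.trace K R (Algebra.lmul K R (x * y)) := rfl

theorem lmulTraceForm_comm (x y : R) : lmulTraceForm K R x y = lmulTraceForm K R y x := by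
  simp only [lmulTraceForm_apply, map_mul, LinearMap.trace_mul_comm]

theorem lmulTraceForm_isSymm : (lmulTraceForm K R).IsSymm :=
  ⟨lmulTraceForm_comm⟩

theorem lmulTraceForm_mul_left (x y z : R) :
    lmulTraceForm K R (x * y) z = lmulTraceForm K R x (y * z) := by
  simp only [lmulTraceForm_apply, mul_assoc]

variable (K R) in
def lmulTraceFormKer : TwoSidedIdeal R :=
  .mk' {x | ∀ y, lmulTraceForm K R x y = 0} (by simp)
    (fun hx hy z ↦ by simp [hx z, hy z]) (fun hx z ↦ by simp [hx z])
    (fun {x y} hy z ↦ by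
      rw [lmulTraceForm_comm, ← lmulTraceForm_mul_left, lmulTraceForm_comm, hy])
    (fun {x y} hx z ↦ by rw [lmulTraceForm_mul_left, hx])

theorem mem_lmulTraceFormKer {x : R} :
    x ∈ lmulTraceFormKer K R ↔ ∀ y, lmulTraceForm K R x y = 0 :=
  TwoSidedIdeal.mem_mk' ..

theorem lmulTraceForm_one_one [FiniteDimensional K R] :
    lmulTraceForm K R 1 1 = Module.finrank K R := by
  rw [lmulTraceForm_apply, mul_one, map_one, LinearMap.trace_one]

theorem lmulTraceForm_nondegenerate [FiniteDimensional K R] [CharZero K] [IsSimpleRing R] :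
    (lmulTraceForm K R).Nondegenerate := by
  refine (LinearMap.IsRefl.nondegenerate_iff_separatingLeft (B := lmulTraceForm K R)
    lmulTraceForm_isSymm.isRefl).mpr fun x hx ↦ by_contra fun hx0 ↦ ?_
  have hker : lmulTraceFormKer K R = ⊤ :=
    (eq_bot_or_eq_top _).resolve_left fun h ↦ hx0 <| by
      rwa [← TwoSidedIdeal.mem_bot, ← h, mem_lmulTraceFormKer]
  have hone := mem_lmulTraceFormKer.mp (hker ▸ TwoSidedIdeal.mem_top (x := (1 : R))) 1
  rw [lmulTraceForm_one_one] at hone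
  exact Module.finrank_pos.ne' (Nat.cast_eq_zero.mp hone)

theorem lmulTraceForm_eq_zero_of_isNilpotent [FiniteDimensional K R] {x y : R}
    (h : IsNilpotent (x * y)) : lmulTraceForm K R x y = 0 :=
  (LinearMap.isNilpotent_trace_of_isNilpotent (h.map (Algebra.lmul K R))).eq_zero

theorem isSemisimpleRing_of_lmulTraceForm_nondegenerate [FiniteDimensional K R]
    (h : (lmulTraceForm K R).Nondegenerate) : IsSemisimpleRing R := by
  have : IsArtinianRing R := isArtinian_of_tower K inferInstance
  obtain ⟨n, hn⟩ := IsArtinianRing.isNilpotent_jacobson_bot (R := R)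
  refine IsArtinianRing.isSemisimpleRing_iff_jacobson.mpr <| eq_bot_iff.mpr fun x hx ↦ ?_
  refine h.1 x fun y ↦ (lmulTraceForm_comm x y).trans <|
    lmulTraceForm_eq_zero_of_isNilpotent ⟨n, ?_⟩
  rw [← Ideal.jacobson_bot] at hx
  simpa [hn] using Ideal.pow_mem_pow (Ideal.mul_mem_left _ y hx) n

theorem lmulTraceForm_baseChange (B : Type*) [Field B] [Algebra K B] [FiniteDimensional K R] :
    lmulTraceForm B (B ⊗[K] R) = (lmulTraceForm K R).baseChange B := by
  let b := Module.Free.chooseBasis K R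
  refine LinearMap.BilinForm.ext_basis (b.baseChange B) fun i j ↦ ?_
  have hlmul (z : R) :
      Algebra.lmul B (B ⊗[K] R) (1 ⊗ₜ z) = (Algebra.lmul K R z).baseChange B := by
    ext u; simp
  simp [Algebra.TensorProduct.tmul_mul_tmul, hlmul, LinearMap.trace_baseChange, Algebra.smul_def]

end Algebra

theorem LinearMap.BilinForm.Nondegenerate.baseChange {K M : Type*} [Field K] [AddCommGroup M]
    [Module K M] [FiniteDimensional K M] {T : LinearMap.BilinForm K M} (hT : T.Nondegenerate)
    (B : Type*) [CommRing B] [IsDomain B] [Algebra K B] : (T.baseChange B).Nondegenerate := by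
  classical
  let b := Module.Free.chooseBasis K M
  rw [LinearMap.BilinForm.nondegenerate_iff_det_ne_zero b] at hT
  rw [LinearMap.BilinForm.nondegenerate_iff_det_ne_zero (b.baseChange B)]
  have : LinearMap.BilinForm.toMatrix (b.baseChange B) (T.baseChange B) =
      (algebraMap K B).mapMatrix (LinearMap.BilinForm.toMatrix b T) := by
    ext i j; simp [LinearMap.BilinForm.toMatrix_apply, Algebra.smul_def]
  rw [this, ← RingHom.map_det]
  exact (map_ne_zero_iff _ (algebraMap K B).injective).mpr hT

theorem IsSimpleRing.isSemisimpleRing_baseChange (K R B : Type*) [Field K] [CharZero K] [Ring R]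
    [Algebra K R] [FiniteDimensional K R] [IsSimpleRing R] [Field B] [Algebra K B] :
    IsSemisimpleRing (B ⊗[K] R) := by
  refine Algebra.isSemisimpleRing_of_lmulTraceForm_nondegenerate (K := B) ?_
  rw [Algebra.lmulTraceForm_baseChange]
  exact Algebra.lmulTraceForm_nondegenerate.baseChange B

/-- Let A be a field of characteristic zero, D a finite-dimensional division A-algebra
(so its center contains A), and W a finite-dimensional left D-vector space.  Then for any
field extension B of A, the B-algebra B ⊗_A End_D(W) is semisimple. -/
theorem stmt_12 {A D W B : Type*} [Field A] [CharZero A]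
    [DivisionRing D] [Algebra A D] [FiniteDimensional A D]
    [AddCommGroup W] [Module D W] [Module.Finite D W]
    [Module A W] [IsScalarTower A D W]
    [Field B] [Algebra A B] :
    IsSemisimpleRing (B ⊗[A] Module.End D W) := by
  rcases subsingleton_or_nontrivial W with _ | _
  · infer_instance
  · have := Module.End.isSimpleRing D W
    have := Module.End.finiteDimensional_of_isScalarTower A D W
    exact IsSimpleRing.isSemisimpleRing_baseChange A (Module.End D W) B
end
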